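/- arXiv:1708.03434 — 5 statements merged into one kernel-verified Lean document; each statement's English description precedes it below -/
import Mathlib

section
/- If z is a symmetric n×n complex matrix (zᵗ = z) and w is a symmetric n×n complex matrix such that I_n − z w* is invertible, then the matrix w* (I_n − z w*)⁻¹ is symmetric. -/
open Matrix

theorem symmetric_of_symmetric_matrices
    (n : ℕ) (z w : Matrix (Fin n) (Fin n) ℂ)
    (hz : zᵀ = z) (hw : wᵀ = w)
    (h : IsUnit ((1 : Matrix (Fin n) (Fin n) ℂ) - z * wᴴ).det) :
    (wᴴ * ((1 : Matrix (Fin n) (Fin n) ℂ) - z * wᴴ)⁻¹)ᵀ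
      = wᴴ * ((1 : Matrix (Fin n) (Fin n) ℂ) - z * wᴴ)⁻¹ := by
  set A := (1 : Matrix (Fin n) (Fin n) ℂ) - z * wᴴ with hA
  set B := (1 : Matrix (Fin n) (Fin n) ℂ) - wᴴ * z with hB
  have hwH : (wᴴ)ᵀ = wᴴ := by
    ext i j
    simp only [Matrix.transpose_apply, Matrix.conjTranspose_apply]
    rw [show w i j = wᵀ i j from (congrFun (congrFun hw i) j).symm,
      Matrix.transpose_apply]
  have hAB : Aᵀ = B := by
    rw [hA, hB, transpose_sub, transpose_one, transpose_mul, hz, hwH]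
  have hBdet : IsUnit B.det := by
    rw [← hAB, Matrix.det_transpose]; exact h
  have key : wᴴ * A = B * wᴴ := by
    rw [hA, hB]; noncomm_ring
  have hinv : B⁻¹ * wᴴ = wᴴ * A⁻¹ := by
    calc B⁻¹ * wᴴ = B⁻¹ * wᴴ * (A * A⁻¹) := by
          rw [Matrix.mul_nonsing_inv _ h, mul_one]
      _ = B⁻¹ * (wᴴ * A) * A⁻¹ := by noncomm_ring
      _ = B⁻¹ * (B * wᴴ) * A⁻¹ := by rw [key]
      _ = (B⁻¹ * B) * (wᴴ * A⁻¹) := by noncomm_ring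
      _ = wᴴ * A⁻¹ := by rw [Matrix.nonsing_inv_mul _ hBdet, one_mul]
  rw [transpose_mul, Matrix.transpose_nonsing_inv, hAB, hwH, hinv]
end

section
/- If z and w are anti-symmetric n×n complex matrices (zᵗ = −z, wᵗ = −w) such that I_n − z w* is invertible, then the matrix w* (I_n − z w*)⁻¹ is anti-symmetric. -/
open Matrix

theorem antisymmetric_of_antisymmetric_matrices
    (n : ℕ) (z w : Matrix (Fin n) (Fin n) ℂ)
    (hz : zᵀ = -z) (hw : wᵀ = -w)
    (h : IsUnit ((1 : Matrix (Fin n) (Fin n) ℂ) - z * wᴴ).det) :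
    (wᴴ * ((1 : Matrix (Fin n) (Fin n) ℂ) - z * wᴴ)⁻¹)ᵀ
      = -(wᴴ * ((1 : Matrix (Fin n) (Fin n) ℂ) - z * wᴴ)⁻¹) := by
  set A := wᴴ with hA
  have hAt : Aᵀ = -A := by
    have : Aᵀ = (wᵀ)ᴴ := by
      rw [hA]
      ext i j
      simp [conjTranspose, transpose]
    rw [this, hw, conjTranspose_neg]
  have hdet2 : IsUnit ((1 : Matrix (Fin n) (Fin n) ℂ) - A * z).det := by
    have : ((1 : Matrix (Fin n) (Fin n) ℂ) - A * z).det
        = ((1 : Matrix (Fin n) (Fin n) ℂ) - z * A).det := by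
      have := Matrix.det_one_add_mul_comm A (-z)
      simpa [mul_neg, neg_mul, sub_eq_add_neg] using this
    rw [this]; exact h
  have comm : ((1 : Matrix (Fin n) (Fin n) ℂ) - A * z) * A
      = A * ((1 : Matrix (Fin n) (Fin n) ℂ) - z * A) := by
    noncomm_ring
  have key : ((1 : Matrix (Fin n) (Fin n) ℂ) - A * z)⁻¹ * A
      = A * ((1 : Matrix (Fin n) (Fin n) ℂ) - z * A)⁻¹ := by
    calc ((1 : Matrix (Fin n) (Fin n) ℂ) - A * z)⁻¹ * A
        = ((1 : Matrix (Fin n) (Fin n) ℂ) - A * z)⁻¹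
            * (((1 : Matrix (Fin n) (Fin n) ℂ) - A * z) * A
              * ((1 : Matrix (Fin n) (Fin n) ℂ) - z * A)⁻¹) := by
          rw [comm, Matrix.mul_nonsing_inv_cancel_right _ _ h]
      _ = A * ((1 : Matrix (Fin n) (Fin n) ℂ) - z * A)⁻¹ := by
          rw [← mul_assoc, ← mul_assoc, Matrix.nonsing_inv_mul _ hdet2, one_mul]
  have htrans : (((1 : Matrix (Fin n) (Fin n) ℂ) - z * A)⁻¹)ᵀ
      = ((1 : Matrix (Fin n) (Fin n) ℂ) - A * z)⁻¹ := by
    rw [Matrix.transpose_nonsing_inv]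
    congr 1
    rw [transpose_sub, transpose_one, transpose_mul, hAt, hz]
    simp [mul_neg, neg_mul]
  rw [transpose_mul, htrans, hAt, mul_neg, key]
end

section
/- Let z, w be symmetric n×n complex matrices with w w* = I_n (w unitary) and assume I_n − z w* and I_n − w* z and I_n − z* w and I_n − w z* are invertible. Then w* (I_n − z w*)⁻¹ (I_n − z z*) (I_n − w z*)⁻¹ w = (I_n − z* w)⁻¹ + (I_n − w* z)⁻¹ − I_n. -/
open Matrix

theorem symmetric_unitary_identity
    (n : ℕ) (z w : Matrix (Fin n) (Fin n) ℂ)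
    (hz : zᵀ = z) (hw : wᵀ = w) (hwu : w * wᴴ = 1)
    (h1 : IsUnit ((1 : Matrix (Fin n) (Fin n) ℂ) - z * wᴴ).det)
    (h2 : IsUnit ((1 : Matrix (Fin n) (Fin n) ℂ) - wᴴ * z).det)
    (h3 : IsUnit ((1 : Matrix (Fin n) (Fin n) ℂ) - zᴴ * w).det)
    (h4 : IsUnit ((1 : Matrix (Fin n) (Fin n) ℂ) - w * zᴴ).det) :
    wᴴ * ((1 : Matrix (Fin n) (Fin n) ℂ) - z * wᴴ)⁻¹ * (1 - z * zᴴ)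
        * ((1 : Matrix (Fin n) (Fin n) ℂ) - w * zᴴ)⁻¹ * w
      = ((1 : Matrix (Fin n) (Fin n) ℂ) - zᴴ * w)⁻¹
        + ((1 : Matrix (Fin n) (Fin n) ℂ) - wᴴ * z)⁻¹ - 1 := by
  have hwu' : wᴴ * w = 1 := mul_eq_one_comm.mp hwu
  set A : Matrix (Fin n) (Fin n) ℂ := 1 - z * wᴴ with hA
  set A' : Matrix (Fin n) (Fin n) ℂ := 1 - wᴴ * z with hA'
  set B : Matrix (Fin n) (Fin n) ℂ := 1 - w * zᴴ with hB
  set B' : Matrix (Fin n) (Fin n) ℂ := 1 - zᴴ * w with hB'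
  have hAi : A * A⁻¹ = 1 := Matrix.mul_nonsing_inv _ h1
  have hA'i : A'⁻¹ * A' = 1 := Matrix.nonsing_inv_mul _ h2
  have hB'i : B' * B'⁻¹ = 1 := Matrix.mul_nonsing_inv _ h3
  have hB'i' : B'⁻¹ * B' = 1 := Matrix.nonsing_inv_mul _ h3
  have hBi : B⁻¹ * B = 1 := Matrix.nonsing_inv_mul _ h4
  have e1 : wᴴ * A = A' * wᴴ := by
    rw [hA, hA']; noncomm_ring
  have e2 : B * w = w * B' := by
    rw [hB, hB']; noncomm_ring
  have e1' : wᴴ * A⁻¹ = A'⁻¹ * wᴴ := by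
    calc wᴴ * A⁻¹ = A'⁻¹ * (A' * wᴴ) * A⁻¹ := by
          rw [← Matrix.mul_assoc, hA'i, Matrix.one_mul]
      _ = A'⁻¹ * (wᴴ * A) * A⁻¹ := by rw [e1]
      _ = A'⁻¹ * wᴴ * (A * A⁻¹) := by
          simp only [Matrix.mul_assoc]
      _ = A'⁻¹ * wᴴ := by rw [hAi, Matrix.mul_one]
  have e2' : B⁻¹ * w = w * B'⁻¹ := by
    calc B⁻¹ * w = B⁻¹ * (w * B') * B'⁻¹ := by
          simp only [Matrix.mul_assoc]; rw [hB'i, Matrix.mul_one]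
      _ = B⁻¹ * (B * w) * B'⁻¹ := by rw [e2]
      _ = w * B'⁻¹ := by rw [← Matrix.mul_assoc B⁻¹ B w, hBi, Matrix.one_mul]
  have key : wᴴ * (1 - z * zᴴ) * w = A' + B' - A' * B' := by
    rw [hA', hB']
    simp only [Matrix.mul_sub, Matrix.sub_mul, Matrix.mul_one, Matrix.one_mul, hwu',
      Matrix.mul_assoc]
    noncomm_ring [hwu']
  calc wᴴ * A⁻¹ * (1 - z * zᴴ) * B⁻¹ * w
      = A'⁻¹ * (wᴴ * (1 - z * zᴴ) * w) * B'⁻¹ := by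
        rw [e1']
        rw [show A'⁻¹ * wᴴ * (1 - z * zᴴ) * B⁻¹ * w
            = A'⁻¹ * wᴴ * (1 - z * zᴴ) * (B⁻¹ * w) from by simp only [Matrix.mul_assoc]]
        rw [e2']
        simp only [Matrix.mul_assoc]
    _ = A'⁻¹ * (A' + B' - A' * B') * B'⁻¹ := by rw [key]
    _ = B'⁻¹ + A'⁻¹ - 1 := by
        simp only [Matrix.mul_add, Matrix.add_mul, Matrix.mul_sub, Matrix.sub_mul]
        rw [hA'i, Matrix.one_mul, ← Matrix.mul_assoc, hA'i, Matrix.one_mul, hB'i,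
          Matrix.mul_assoc, hB'i, Matrix.mul_one]
end

section
/- For real a, b, s > 0 with a > s and b > s, one has lim_{t→1⁻} (1−t)^s F(a, b, a+b−s; t) = Γ(a+b−s) Γ(s) / (Γ(a) Γ(b)), where F is the Gauss hypergeometric function. -/
open Real Filter MeasureTheory FormalMultilinearSeries

/-- The Gauss hypergeometric series over ℝ. -/
noncomputable def hypF (a b c t : ℝ) : ℝ :=
  ∑' n : ℕ, ((ascPochhammer ℝ n).eval a * (ascPochhammer ℝ n).eval b
    / ((ascPochhammer ℝ n).eval c * (n.factorial : ℝ))) * t ^ n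

/-- Pochhammer evaluation abbreviation. -/
noncomputable def pch (a : ℝ) (n : ℕ) : ℝ := (ascPochhammer ℝ n).eval a

lemma pch_zero (a : ℝ) : pch a 0 = 1 := by simp [pch]

lemma pch_succ (a : ℝ) (n : ℕ) : pch a (n + 1) = pch a n * (a + n) := by
  simp [pch, ascPochhammer_succ_right]

lemma pch_pos {a : ℝ} (ha : 0 < a) : ∀ n, 0 < pch a n := by
  intro n
  induction n with
  | zero => simp [pch_zero]
  | succ n ih => rw [pch_succ]; positivity

lemma Gamma_pch {a : ℝ} (ha : 0 < a) : ∀ n : ℕ, Real.Gamma (a + n) = pch a n * Real.Gamma a := by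
  intro n
  induction n with
  | zero => simp [pch_zero]
  | succ n ih =>
    have h : a + (n + 1 : ℕ) = (a + n) + 1 := by push_cast; ring
    rw [h, Real.Gamma_add_one (by positivity), ih, pch_succ]; ring

lemma bc_ratio {a : ℝ} (n : ℕ) :
    pch a (n + 1) / (n + 1).factorial = pch a n / n.factorial * ((a + n) / (n + 1)) := by
  have h2 : (n.factorial : ℝ) ≠ 0 := by positivity
  rw [pch_succ, Nat.factorial_succ]
  push_cast
  rw [div_mul_div_comm]
  rw [div_eq_div_iff (by positivity) (by positivity)]
  ring

lemma tendsto_ratio_aux2 {c d : ℝ} (hd : 0 < d) :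
    Tendsto (fun n : ℕ => ((n : ℝ) + c) / (n + d)) atTop (nhds 1) := by
  have h1 : Tendsto (fun n : ℕ => 1 + (c - d) / (n + d)) atTop (nhds (1 + 0)) := by
    refine tendsto_const_nhds.add ?_
    exact Tendsto.div_atTop tendsto_const_nhds
      (tendsto_atTop_add_const_right _ d tendsto_natCast_atTop_atTop)
  rw [add_zero] at h1
  apply h1.congr'
  filter_upwards [eventually_gt_atTop 0] with n hn
  have hna : (n : ℝ) + d ≠ 0 := by positivity
  field_simp
  ring

lemma tendsto_ratio_aux {a : ℝ} (ha : 0 < a) :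
    Tendsto (fun n : ℕ => ((n : ℝ) + 1) / (n + a)) atTop (nhds 1) :=
  tendsto_ratio_aux2 ha

section Binomial

variable {a : ℝ}

/-- coefficients of the binomial series -/
noncomputable def bc (a : ℝ) (n : ℕ) : ℝ := pch a n / n.factorial

lemma bc_pos (ha : 0 < a) (n : ℕ) : 0 < bc a n := by
  have := pch_pos ha n
  have := n.factorial_pos
  unfold bc; positivity

lemma bc_succ (a : ℝ) (n : ℕ) : bc a (n + 1) = bc a n * ((a + n) / (n + 1)) := bc_ratio n

lemma ofScalars_bc_radius (ha : 0 < a) : (ofScalars ℝ (bc a)).radius = 1 := by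
  apply ofScalars_radius_eq_of_tendsto ℝ (bc a) one_ne_zero
  have h : ∀ᶠ n : ℕ in atTop, ((n : ℝ) + 1) / (n + a) = ‖bc a n‖ / ‖bc a (n + 1)‖ := by
    filter_upwards [eventually_ge_atTop 0] with n _
    rw [Real.norm_eq_abs, Real.norm_eq_abs, abs_of_pos (bc_pos ha n),
      abs_of_pos (bc_pos ha (n + 1)), bc_succ]
    have h1 : bc a n ≠ 0 := ne_of_gt (bc_pos ha n)
    have h2 : a + (n : ℝ) ≠ 0 := by positivity
    have h3 : (n : ℝ) + 1 ≠ 0 := by positivity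
    field_simp
    ring
  simpa using (tendsto_ratio_aux ha).congr' h

lemma mem_ball_of_abs {u : ℝ} (hu : |u| < 1) : u ∈ Metric.eball (0 : ℝ) 1 := by
  rw [Metric.mem_eball, edist_zero_right]
  have : ‖u‖₊ < 1 := by
    rw [← Real.norm_eq_abs] at hu
    exact_mod_cast hu
  rw [enorm_eq_nnnorm]
  exact_mod_cast this

lemma hasSum_ofScalars (ha : 0 < a) {u : ℝ} (hu : |u| < 1) :
    HasSum (fun n : ℕ => bc a n * u ^ n) ((ofScalars ℝ (bc a)).sum u) := by
  have hb := (ofScalars ℝ (bc a)).hasFPowerSeriesOnBall (by rw [ofScalars_bc_radius ha]; norm_num)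
  rw [ofScalars_bc_radius ha] at hb
  have := hb.hasSum (y := u) (mem_ball_of_abs hu)
  rw [zero_add] at this
  exact this.congr_fun fun n => by rw [ofScalars_apply_eq, smul_eq_mul]

lemma hasSum_deriv_ofScalars (ha : 0 < a) {u : ℝ} (hu : |u| < 1) :
    HasSum (fun n : ℕ => ((n : ℝ) + 1) * bc a (n + 1) * u ^ (n + 1))
      (u * deriv (ofScalars ℝ (bc a)).sum u) := by
  have hb := (ofScalars ℝ (bc a)).hasFPowerSeriesOnBall (by rw [ofScalars_bc_radius ha]; norm_num)
  rw [ofScalars_bc_radius ha] at hb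
  have hd := hb.fderiv.hasSum (y := u) (mem_ball_of_abs hu)
  rw [zero_add] at hd
  have := hd.mapL (ContinuousLinearMap.apply ℝ ℝ u)
  simp only [ContinuousLinearMap.apply_apply] at this
  have heq : ∀ n : ℕ, ((ofScalars ℝ (bc a)).derivSeries n fun _ => u) u
      = ((n : ℝ) + 1) * bc a (n + 1) * u ^ (n + 1) := by
    intro n
    rw [FormalMultilinearSeries.derivSeries_apply_diag]
    rw [ofScalars_apply_eq]
    push_cast
    simp [smul_eq_mul]
    ring
  have hfd : fderiv ℝ (ofScalars ℝ (bc a)).sum u u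
      = u * deriv (ofScalars ℝ (bc a)).sum u := by
    have : u = u • (1 : ℝ) := by simp
    conv_lhs => rw [this, ContinuousLinearMap.map_smul]
    rw [fderiv_apply_one_eq_deriv]
    simp [smul_eq_mul]
  rw [hfd] at this
  exact this.congr_fun fun n => (heq n).symm

lemma differentiableAt_sum (ha : 0 < a) {u : ℝ} (hu : |u| < 1) :
    DifferentiableAt ℝ (ofScalars ℝ (bc a)).sum u := by
  have hb := (ofScalars ℝ (bc a)).hasFPowerSeriesOnBall (by rw [ofScalars_bc_radius ha]; norm_num)
  rw [ofScalars_bc_radius ha] at hb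
  exact hb.differentiableOn.differentiableAt
    (EMetric.isOpen_ball.mem_nhds (mem_ball_of_abs hu))

lemma sum_zero_val (ha : 0 < a) : (ofScalars ℝ (bc a)).sum 0 = 1 := by
  have h := hasSum_ofScalars ha (u := 0) (by norm_num)
  have h2 : HasSum (fun n : ℕ => bc a n * (0:ℝ) ^ n) (bc a 0) := by
    convert hasSum_single (f := fun n : ℕ => bc a n * (0:ℝ) ^ n) 0 ?_ using 2
    · simp
    · intro n hn
      simp [zero_pow hn]
  have := h.unique h2
  rw [this]
  simp [bc, pch_zero]

lemma ode_sum (ha : 0 < a) {u : ℝ} (hu : |u| < 1) :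
    (1 - u) * deriv (ofScalars ℝ (bc a)).sum u = a * (ofScalars ℝ (bc a)).sum u := by
  set g := (ofScalars ℝ (bc a)).sum with hg
  rcases eq_or_ne u 0 with rfl | hu0
  · -- at zero
    have hb := (ofScalars ℝ (bc a)).hasFPowerSeriesOnBall (by rw [ofScalars_bc_radius ha]; norm_num)
    have hat := hb.hasFPowerSeriesAt
    have hder : deriv g 0 = a := by
      rw [hat.deriv, ofScalars_apply_eq]
      simp [bc, pch_succ, pch_zero]
    rw [hder, hg, sum_zero_val ha]
    ring
  · have h1 := hasSum_deriv_ofScalars ha hu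
    have hS := hasSum_ofScalars ha hu
    set A := u * deriv g u with hA
    -- h3 : sum (a+n) * bc n * u^(n+1) = A
    have h3 : HasSum (fun n : ℕ => (a + n) * bc a n * u ^ (n + 1)) A := by
      refine h1.congr_fun fun n => ?_
      rw [bc_succ]
      have : ((n : ℝ) + 1) ≠ 0 := by positivity
      field_simp
    -- h2 : sum n * bc n * u^(n+1) = u * A
    have h2 : HasSum (fun n : ℕ => (n : ℝ) * bc a n * u ^ (n + 1)) (u * A) := by
      have hm := h1.mul_left u
      have := (hasSum_nat_add_iff (f := fun n : ℕ => (n : ℝ) * bc a n * u ^ (n + 1)) 1).mp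
        (hm.congr_fun fun n => by push_cast; ring)
      simpa using this
    have h4 := h3.sub h2
    have h5 := hS.mul_left (a * u)
    have h6 : HasSum (fun n : ℕ => a * u * (bc a n * u ^ n)) (A - u * A) := by
      refine h4.congr_fun fun n => ?_
      ring
    have := h6.unique h5
    have hkey : A - u * A = a * u * g u := this
    rw [hA] at hkey
    have : u * ((1 - u) * deriv g u) = u * (a * g u) := by ring_nf; ring_nf at hkey; linarith [hkey]
    exact mul_left_cancel₀ hu0 this

/-- The binomial series. -/
lemma sum_eq_rpow (ha : 0 < a) {u : ℝ} (hu : |u| < 1) :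
    (ofScalars ℝ (bc a)).sum u = (1 - u) ^ (-a) := by
  set g := (ofScalars ℝ (bc a)).sum with hg
  set φ : ℝ → ℝ := fun v => (1 - v) ^ a * g v with hφ
  have key : ∀ v ∈ Set.Ioo (-1 : ℝ) 1, HasDerivAt φ 0 v := by
    intro v hv
    have hv1 : |v| < 1 := abs_lt.mpr ⟨hv.1, hv.2⟩
    have hvpos : 0 < 1 - v := by linarith [hv.2]
    have hd1 : HasDerivAt (fun v : ℝ => (1 - v) ^ a) (-(a * (1 - v) ^ (a - 1))) v := by
      have hbase : HasDerivAt (fun v : ℝ => 1 - v) (-1) v := by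
        simpa using (hasDerivAt_id v).const_sub 1
      have hpow := Real.hasDerivAt_rpow_const (x := 1 - v) (p := a) (Or.inl (ne_of_gt hvpos))
      have := hpow.comp v hbase
      exact this.congr_deriv (by ring)
    have hd2 : HasDerivAt g (deriv g v) v := (differentiableAt_sum ha hv1).hasDerivAt
    have hmul := hd1.mul hd2
    have : -(a * (1 - v) ^ (a - 1)) * g v + (1 - v) ^ a * deriv g v = 0 := by
      have hsplit : (1 - v) ^ a = (1 - v) ^ (a - 1) * (1 - v) := by
        rw [← Real.rpow_add_one (ne_of_gt hvpos)]
        ring_nf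
      rw [hsplit]
      have hode := ode_sum ha hv1
      rw [← hg] at hode
      linear_combination (1 - v) ^ (a - 1) * hode
    rw [this] at hmul
    exact hmul
  have hconst : ∀ v ∈ Set.Ioo (-1 : ℝ) 1, φ v = φ 0 := by
    intro v hv
    have hconv : Convex ℝ (Set.Ioo (-1 : ℝ) 1) := convex_Ioo _ _
    have hdiff : DifferentiableOn ℝ φ (Set.Ioo (-1 : ℝ) 1) := fun x hx =>
      ((key x hx).differentiableAt).differentiableWithinAt
    have hfder : ∀ x ∈ Set.Ioo (-1 : ℝ) 1, fderivWithin ℝ φ (Set.Ioo (-1 : ℝ) 1) x = 0 := by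
      intro x hx
      have hopen : Set.Ioo (-1 : ℝ) 1 ∈ nhds x := (isOpen_Ioo).mem_nhds hx
      rw [fderivWithin_of_mem_nhds hopen]
      have := (key x hx).deriv
      have hfd : fderiv ℝ φ x = 0 := by
        ext y
        have hdd := (key x hx).hasFDerivAt
        rw [hdd.fderiv]
        simp
      exact hfd
    exact hconv.is_const_of_fderivWithin_eq_zero hdiff hfder hv (by norm_num)
  have hu' : u ∈ Set.Ioo (-1 : ℝ) 1 := ⟨(abs_lt.mp hu).1, (abs_lt.mp hu).2⟩
  have h0 : φ 0 = 1 := by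
    simp only [hφ]
    rw [hg, sum_zero_val ha]
    simp
  have := hconst u hu'
  rw [h0] at this
  have hupos : 0 < 1 - u := by linarith [(abs_lt.mp hu).2]
  have hgu : g u = ((1 - u) ^ a)⁻¹ := by
    simp only [hφ] at this
    rw [mul_comm] at this
    exact eq_inv_of_mul_eq_one_left this
  rw [hgu, ← Real.rpow_neg (le_of_lt hupos)]

/-- The binomial series. -/
lemma hasSum_binomial (ha : 0 < a) {u : ℝ} (hu : |u| < 1) :
    HasSum (fun n : ℕ => pch a n / n.factorial * u ^ n) ((1 - u) ^ (-a)) := by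
  have := hasSum_ofScalars ha hu
  rw [sum_eq_rpow ha hu] at this
  exact this

end Binomial

section Beta

/-- Real beta integral over `Ioo 0 1`. -/
noncomputable def rbeta (p q : ℝ) : ℝ :=
  ∫ x in Set.Ioo (0:ℝ) 1, x ^ (p - 1) * (1 - x) ^ (q - 1)

lemma complex_integrand_eq {p q : ℝ} {x : ℝ} (hx0 : 0 ≤ x) (hx1 : x ≤ 1) :
    (x : ℂ) ^ ((p : ℂ) - 1) * (1 - (x : ℂ)) ^ ((q : ℂ) - 1)
      = ((x ^ (p - 1) * (1 - x) ^ (q - 1) : ℝ) : ℂ) := by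
  have h1 : ((p : ℂ) - 1) = ((p - 1 : ℝ) : ℂ) := by push_cast; ring
  have h2 : ((q : ℂ) - 1) = ((q - 1 : ℝ) : ℂ) := by push_cast; ring
  have h3 : (1 - (x : ℂ)) = ((1 - x : ℝ) : ℂ) := by push_cast; ring
  rw [h1, h2, h3, ← Complex.ofReal_cpow hx0, ← Complex.ofReal_cpow (by linarith), ← Complex.ofReal_mul]

lemma integrableOn_beta {p q : ℝ} (hp : 0 < p) (hq : 0 < q) :
    IntegrableOn (fun x : ℝ => x ^ (p - 1) * (1 - x) ^ (q - 1)) (Set.Ioo 0 1) := by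
  have hc := Complex.betaIntegral_convergent (u := (p : ℂ)) (v := (q : ℂ))
    (by simpa using hp) (by simpa using hq)
  rw [intervalIntegrable_iff] at hc
  rw [Set.uIoc_of_le (by norm_num : (0:ℝ) ≤ 1)] at hc
  have hre := hc.re
  have : IntegrableOn (fun x : ℝ => x ^ (p - 1) * (1 - x) ^ (q - 1)) (Set.Ioc 0 1) := by
    apply MeasureTheory.IntegrableOn.congr_fun hre ?_ measurableSet_Ioc
    intro x hx
    dsimp only
    rw [complex_integrand_eq (le_of_lt hx.1) hx.2]
    simp
  exact this.mono_set Set.Ioo_subset_Ioc_self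

lemma rbeta_eq {p q : ℝ} (hp : 0 < p) (hq : 0 < q) :
    rbeta p q = Real.Gamma p * Real.Gamma q / Real.Gamma (p + q) := by
  have hmain := Complex.Gamma_mul_Gamma_eq_betaIntegral (s := (p : ℂ)) (t := (q : ℂ))
    (by simpa using hp) (by simpa using hq)
  have hbeta : Complex.betaIntegral (p : ℂ) (q : ℂ) = ((rbeta p q : ℝ) : ℂ) := by
    unfold Complex.betaIntegral rbeta
    rw [show ∫ x in Set.Ioo (0:ℝ) 1, x ^ (p - 1) * (1 - x) ^ (q - 1)
        = ∫ x in (0:ℝ)..1, x ^ (p - 1) * (1 - x) ^ (q - 1) by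
      rw [intervalIntegral.integral_of_le (by norm_num : (0:ℝ) ≤ 1),
        MeasureTheory.integral_Ioc_eq_integral_Ioo]]
    rw [← intervalIntegral.integral_ofReal]
    apply intervalIntegral.integral_congr
    intro x hx
    rw [Set.uIcc_of_le (by norm_num : (0:ℝ) ≤ 1)] at hx
    exact complex_integrand_eq hx.1 hx.2
  rw [hbeta] at hmain
  have hpq : ((p : ℂ) + (q : ℂ)) = ((p + q : ℝ) : ℂ) := by push_cast; ring
  rw [hpq, Complex.Gamma_ofReal, Complex.Gamma_ofReal, Complex.Gamma_ofReal] at hmain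
  have hmain' : Real.Gamma p * Real.Gamma q = Real.Gamma (p + q) * rbeta p q := by
    exact_mod_cast hmain
  have hne : Real.Gamma (p + q) ≠ 0 := ne_of_gt (Real.Gamma_pos_of_pos (by positivity))
  field_simp [hne]
  linarith [hmain']

lemma rbeta_pos {p q : ℝ} (hp : 0 < p) (hq : 0 < q) : 0 < rbeta p q := by
  rw [rbeta_eq hp hq]
  have := Real.Gamma_pos_of_pos hp
  have := Real.Gamma_pos_of_pos hq
  have := Real.Gamma_pos_of_pos (show 0 < p + q by positivity)
  positivity

end Beta

section Euler

lemma hypF_eq (a b c t : ℝ) :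
    hypF a b c t = ∑' n : ℕ, (pch a n * pch b n / (pch c n * n.factorial)) * t ^ n := rfl

lemma rbeta_shift {β γ : ℝ} (hβ : 0 < β) (hγβ : 0 < γ - β) (n : ℕ) :
    rbeta (β + n) (γ - β) = pch β n / pch γ n * rbeta β (γ - β) := by
  have hγ : 0 < γ := by linarith
  have h1 : (0:ℝ) < β + n := by positivity
  rw [rbeta_eq h1 hγβ, rbeta_eq hβ hγβ]
  have h2 : β + (n:ℝ) + (γ - β) = γ + n := by ring
  rw [h2, Gamma_pch hβ n, Gamma_pch hγ n]
  have hgβ := Real.Gamma_pos_of_pos hβ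
  have hgγ := Real.Gamma_pos_of_pos hγ
  have hgγβ := Real.Gamma_pos_of_pos hγβ
  have hpβ := pch_pos hβ n
  have hpγ := pch_pos hγ n
  have hβγ : β + (γ - β) = γ := by ring
  rw [hβγ]
  field_simp

lemma summable_coeff {α β γ t : ℝ} (hα : 0 < α) (hβ : 0 < β) (hγ : 0 < γ)
    (ht0 : 0 < t) (ht1 : t < 1) :
    Summable (fun n : ℕ => pch α n / n.factorial * t ^ n * (pch β n / pch γ n)) := by
  set e := fun n : ℕ => pch α n / n.factorial * t ^ n * (pch β n / pch γ n) with he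
  have hepos : ∀ n, 0 < e n := by
    intro n
    have := pch_pos hα n; have := pch_pos hβ n; have := pch_pos hγ n
    have := n.factorial_pos
    rw [he]; positivity
  apply summable_of_ratio_test_tendsto_lt_one ht1
    (Eventually.of_forall fun n => ne_of_gt (hepos n))
  have hratio : ∀ n : ℕ, ‖e (n + 1)‖ / ‖e n‖
      = ((n : ℝ) + α) / (n + 1) * (((n : ℝ) + β) / (n + γ)) * t := by
    intro n
    rw [Real.norm_eq_abs, Real.norm_eq_abs, abs_of_pos (hepos (n+1)), abs_of_pos (hepos n), he]
    simp only
    rw [pch_succ, pch_succ, pch_succ, Nat.factorial_succ]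
    have h1 : (pch α n) ≠ 0 := ne_of_gt (pch_pos hα n)
    have h2 : (pch β n) ≠ 0 := ne_of_gt (pch_pos hβ n)
    have h3 : (pch γ n) ≠ 0 := ne_of_gt (pch_pos hγ n)
    have h4 : ((n.factorial : ℝ)) ≠ 0 := by positivity
    have h5 : ((n : ℝ) + 1) ≠ 0 := by positivity
    have h6 : (t : ℝ) ≠ 0 := ne_of_gt ht0
    have h7 : ((n : ℝ) + γ) ≠ 0 := by positivity
    have h8 : γ + (n : ℝ) ≠ 0 := by positivity
    have h9 : t ^ n ≠ 0 := pow_ne_zero n h6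
    field_simp
    push_cast
    ring
  have hlim : Tendsto (fun n : ℕ => ((n : ℝ) + α) / (n + 1) * (((n : ℝ) + β) / (n + γ)) * t)
      atTop (nhds (1 * 1 * t)) :=
    ((tendsto_ratio_aux2 one_pos).mul (tendsto_ratio_aux2 hγ)).mul tendsto_const_nhds
  rw [one_mul, one_mul] at hlim
  exact (hlim.congr fun n => (hratio n).symm)

lemma euler_rep {α β γ t : ℝ} (hα : 0 < α) (hβ : 0 < β) (hγβ : 0 < γ - β)
    (ht0 : 0 < t) (ht1 : t < 1) :
    ∫ x in Set.Ioo (0:ℝ) 1, x ^ (β - 1) * (1 - x) ^ (γ - β - 1) * (1 - t * x) ^ (-α)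
      = rbeta β (γ - β) * hypF α β γ t := by
  have hγ : 0 < γ := by linarith
  set f : ℕ → ℝ → ℝ := fun n x =>
    pch α n / n.factorial * t ^ n * (x ^ (β + n - 1) * (1 - x) ^ (γ - β - 1)) with hf
  -- pointwise expansion on Ioo
  have hpt : ∀ x ∈ Set.Ioo (0:ℝ) 1,
      x ^ (β - 1) * (1 - x) ^ (γ - β - 1) * (1 - t * x) ^ (-α) = ∑' n, f n x := by
    intro x hx
    have hx0 : 0 < x := hx.1
    have hx1 : x < 1 := hx.2
    have htx : |t * x| < 1 := by
      rw [abs_of_pos (by positivity)]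
      nlinarith
    have hbin := (hasSum_binomial hα htx).tsum_eq
    rw [show (1 : ℝ) - t * x = 1 - t * x from rfl] at hbin
    rw [← hbin, ← tsum_mul_left]
    congr 1
    funext n
    rw [hf]
    simp only
    have hxn : x ^ (β + n - 1) = x ^ (β - 1) * x ^ (n : ℕ) := by
      rw [← Real.rpow_natCast x n, ← Real.rpow_add hx0]
      congr 1
      ring
    rw [hxn, mul_pow]
    ring
  -- integrability of each term
  have hint : ∀ n : ℕ, IntegrableOn (f n) (Set.Ioo (0:ℝ) 1) := by
    intro n
    have h1 : (0:ℝ) < β + n := by positivity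
    have := (integrableOn_beta h1 hγβ).const_mul (pch α n / n.factorial * t ^ n)
    apply MeasureTheory.IntegrableOn.congr_fun this ?_ measurableSet_Ioo
    intro x _
    rw [hf]
  -- value of each integral
  have hval : ∀ n : ℕ, ∫ x in Set.Ioo (0:ℝ) 1, f n x
      = pch α n / n.factorial * t ^ n * (pch β n / pch γ n * rbeta β (γ - β)) := by
    intro n
    rw [hf]
    simp only
    rw [MeasureTheory.integral_const_mul]
    congr 1
    rw [← rbeta_shift hβ hγβ n]
    rw [rbeta]
  -- summability of the integrals of norms
  have hnonneg : ∀ n : ℕ, ∀ x ∈ Set.Ioo (0:ℝ) 1, 0 ≤ f n x := by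
    intro n x hx
    have := pch_pos hα n
    have hx0 : (0:ℝ) < x := hx.1
    have hx1 : x < 1 := hx.2
    have hfac := n.factorial_pos
    rw [hf]
    simp only
    have : (0:ℝ) < 1 - x := by linarith
    positivity
  have hsum : Summable fun n : ℕ => ∫ x in Set.Ioo (0:ℝ) 1, ‖f n x‖ := by
    have heq : ∀ n : ℕ, (∫ x in Set.Ioo (0:ℝ) 1, ‖f n x‖) = ∫ x in Set.Ioo (0:ℝ) 1, f n x := by
      intro n
      apply MeasureTheory.setIntegral_congr_fun measurableSet_Ioo
      intro x hx
      exact Real.norm_of_nonneg (hnonneg n x hx)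
    rw [funext heq]
    have hS := (summable_coeff hα hβ hγ ht0 ht1).mul_right (rbeta β (γ - β))
    apply hS.congr
    intro n
    rw [hval n]
    ring
  -- interchange
  have hinter := MeasureTheory.integral_tsum_of_summable_integral_norm hint hsum
  calc ∫ x in Set.Ioo (0:ℝ) 1, x ^ (β - 1) * (1 - x) ^ (γ - β - 1) * (1 - t * x) ^ (-α)
      = ∫ x in Set.Ioo (0:ℝ) 1, ∑' n, f n x := by
        apply MeasureTheory.setIntegral_congr_fun measurableSet_Ioo
        intro x hx
        exact hpt x hx
    _ = ∑' n, ∫ x in Set.Ioo (0:ℝ) 1, f n x := hinter.symm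
    _ = rbeta β (γ - β) * hypF α β γ t := by
        rw [hypF_eq, ← tsum_mul_left]
        congr 1
        funext n
        rw [hval n]
        have h1 : (pch γ n) ≠ 0 := ne_of_gt (pch_pos hγ n)
        have h2 : ((n.factorial : ℝ)) ≠ 0 := by positivity
        field_simp

end Euler

section Moebius

variable {a b s t : ℝ}

lemma moebius_sub (ha : 0 < a) (hb : 0 < b) (hs : 0 < s) (has : s < a)
    (ht0 : 0 < t) (ht1 : t < 1) :
    ∫ x in Set.Ioo (0:ℝ) 1, x ^ (b - 1) * (1 - x) ^ (a - s - 1) * (1 - t * x) ^ (-a)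
      = (1 - t) ^ (-s) * ∫ y in Set.Ioo (0:ℝ) 1,
          y ^ (a - s - 1) * (1 - y) ^ (b - 1) * (1 - t * y) ^ (s - b) := by
  set φ : ℝ → ℝ := fun y => (1 - y) / (1 - t * y) with hφ
  set φ' : ℝ → ℝ := fun y => (t - 1) / (1 - t * y) ^ 2 with hφ'
  have hden : ∀ y : ℝ, y ∈ Set.Ioo (0:ℝ) 1 → 0 < 1 - t * y := by
    intro y hy
    nlinarith [hy.1, hy.2]
  have hderiv : ∀ y ∈ Set.Ioo (0:ℝ) 1, HasDerivWithinAt φ (φ' y) (Set.Ioo 0 1) y := by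
    intro y hy
    have h1 : HasDerivAt (fun y : ℝ => 1 - y) (-1) y := by
      simpa using (hasDerivAt_id y).const_sub 1
    have h2 : HasDerivAt (fun y : ℝ => 1 - t * y) (-t) y := by
      simpa using ((hasDerivAt_id y).const_mul t).const_sub 1
    have hd := h1.div h2 (ne_of_gt (hden y hy))
    have : φ' y = ((-1) * (1 - t * y) - (1 - y) * (-t)) / (1 - t * y) ^ 2 := by
      rw [hφ']
      congr 1
      ring
    rw [this]
    exact hd.hasDerivWithinAt
  have hmaps : ∀ x ∈ Set.Ioo (0:ℝ) 1, φ x ∈ Set.Ioo (0:ℝ) 1 := by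
    intro x hx
    have hd := hden x hx
    constructor
    · exact div_pos (by linarith [hx.2]) hd
    · rw [div_lt_one hd]
      nlinarith [hx.1]
  have hinv : ∀ x ∈ Set.Ioo (0:ℝ) 1, φ (φ x) = x := by
    intro x hx
    have hd := hden x hx
    have hd2 := hden (φ x) (hmaps x hx)
    rw [hφ] at hd2 ⊢
    simp only at hd2 ⊢
    have hd' := hd.ne'
    have hnum : 1 - (1 - x) / (1 - t * x) = x * (1 - t) / (1 - t * x) := by
      rw [eq_div_iff hd', sub_mul, div_mul_cancel₀ _ hd']
      ring
    have hden3 : 1 - t * ((1 - x) / (1 - t * x)) = (1 - t) / (1 - t * x) := by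
      field_simp
      ring
    rw [hnum, hden3]
    have h1tne : (1:ℝ) - t ≠ 0 := by linarith
    field_simp
    exact mul_div_cancel_right₀ x (by rwa [mul_comm] at hd')
  have hinj : Set.InjOn φ (Set.Ioo 0 1) := by
    intro y1 hy1 y2 hy2 heq
    have d1 := ne_of_gt (hden y1 hy1)
    have d2 := ne_of_gt (hden y2 hy2)
    rw [hφ] at heq
    simp only at heq
    rw [div_eq_div_iff d1 d2] at heq
    have hz : (1 - t) * (y2 - y1) = 0 := by linear_combination heq
    rcases mul_eq_zero.mp hz with h | h
    · linarith
    · linarith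
  have himg : φ '' Set.Ioo 0 1 = Set.Ioo 0 1 := by
    apply Set.Subset.antisymm
    · rintro x ⟨y, hy, rfl⟩
      exact hmaps y hy
    · intro x hx
      exact ⟨φ x, hmaps x hx, hinv x hx⟩
  have hsub := MeasureTheory.integral_image_eq_integral_abs_deriv_smul measurableSet_Ioo
    hderiv hinj (fun x => x ^ (b - 1) * (1 - x) ^ (a - s - 1) * (1 - t * x) ^ (-a))
  rw [himg] at hsub
  rw [hsub, ← MeasureTheory.integral_const_mul]
  apply MeasureTheory.setIntegral_congr_fun measurableSet_Ioo
  intro y hy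
  have hy0 := hy.1
  have hy1 := hy.2
  have hP : 0 < 1 - t * y := hden y hy
  have h1y : (0:ℝ) < 1 - y := by linarith
  have h1t : (0:ℝ) < 1 - t := by linarith
  have habs : |φ' y| = (1 - t) ^ (1:ℝ) / (1 - t * y) ^ (2:ℝ) := by
    rw [hφ']
    simp only
    rw [abs_div, abs_of_neg (by linarith : t - 1 < 0), abs_of_pos (by positivity)]
    rw [Real.rpow_one]
    congr 1
    · ring
    · rw [show (2:ℝ) = ((2:ℕ):ℝ) by norm_num, Real.rpow_natCast]
  have hXq : φ y = (1 - y) / (1 - t * y) := rfl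
  have h1Xq : 1 - φ y = y * (1 - t) / (1 - t * y) := by
    rw [hXq]
    rw [eq_div_iff hP.ne', sub_mul, div_mul_cancel₀ _ hP.ne']
    ring
  have h1tXq : 1 - t * φ y = (1 - t) / (1 - t * y) := by
    rw [hXq]
    field_simp
    ring
  simp only [smul_eq_mul]
  rw [habs, hXq, h1Xq, h1tXq]
  rw [Real.div_rpow h1y.le hP.le, Real.div_rpow (by positivity) hP.le,
    Real.div_rpow h1t.le hP.le, Real.mul_rpow hy0.le h1t.le]
  simp only [Real.rpow_def_of_pos h1t, Real.rpow_def_of_pos hP, Real.rpow_def_of_pos h1y,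
    Real.rpow_def_of_pos hy0, div_eq_mul_inv, ← Real.exp_neg, ← Real.exp_add]
  congr 1
  ring

end Moebius

section Limit

variable {a b s : ℝ}

lemma tendsto_integral_limit (ha : 0 < a) (hb : 0 < b) (hs : 0 < s) (has : s < a) (hbs : s < b) :
    Tendsto (fun t : ℝ => ∫ y in Set.Ioo (0:ℝ) 1,
        y ^ (a - s - 1) * (1 - y) ^ (b - 1) * (1 - t * y) ^ (s - b))
      (nhdsWithin 1 (Set.Iio 1)) (nhds (rbeta (a - s) s)) := by
  have hbound_eq : rbeta (a - s) s
      = ∫ y in Set.Ioo (0:ℝ) 1, y ^ (a - s - 1) * (1 - y) ^ (b - 1) * (1 - y) ^ (s - b) := by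
    rw [rbeta]
    apply MeasureTheory.setIntegral_congr_fun measurableSet_Ioo
    intro y hy
    have h1y : (0:ℝ) < 1 - y := by linarith [hy.2]
    dsimp only
    rw [mul_assoc, ← Real.rpow_add h1y]
    congr 2
    ring
  rw [hbound_eq]
  apply MeasureTheory.tendsto_integral_filter_of_dominated_convergence
    (bound := fun y => y ^ (a - s - 1) * (1 - y) ^ (s - 1))
  · -- measurability
    filter_upwards [self_mem_nhdsWithin] with t ht
    have ht1 : t < 1 := ht
    apply ContinuousOn.aestronglyMeasurable ?_ measurableSet_Ioo
    apply ContinuousOn.mul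
    apply ContinuousOn.mul
    · exact (continuousOn_id.rpow_const fun y hy => Or.inl (ne_of_gt hy.1))
    · exact ((continuousOn_const.sub continuousOn_id).rpow_const
        fun y hy => Or.inl (by
          show (1:ℝ) - y ≠ 0
          have := hy.2
          intro h
          simp only [Set.mem_Ioo] at hy
          nlinarith [hy.2]))
    · exact ((continuousOn_const.sub (continuousOn_const.mul continuousOn_id)).rpow_const
        fun y hy => Or.inl (by
          show (1:ℝ) - t * y ≠ 0
          simp only [Set.mem_Ioo] at hy
          have : t * y < y := by nlinarith [hy.1]
          intro h
          nlinarith [hy.2]))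
  · -- bound
    filter_upwards [self_mem_nhdsWithin] with t ht
    rw [MeasureTheory.ae_restrict_iff' measurableSet_Ioo]
    apply Eventually.of_forall
    intro y hy
    have hy0 := hy.1
    have hy1 := hy.2
    have h1y : (0:ℝ) < 1 - y := by linarith
    have hty : t * y < y := by
      have : t < 1 := ht
      nlinarith
    have h1ty : (0:ℝ) < 1 - t * y := by linarith
    have hle : (1 - t * y) ^ (s - b) ≤ (1 - y) ^ (s - b) :=
      Real.rpow_le_rpow_of_nonpos h1y (by linarith) (by linarith)
    rw [Real.norm_eq_abs, abs_of_nonneg (by positivity)]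
    calc y ^ (a - s - 1) * (1 - y) ^ (b - 1) * (1 - t * y) ^ (s - b)
        ≤ y ^ (a - s - 1) * (1 - y) ^ (b - 1) * (1 - y) ^ (s - b) := by
          apply mul_le_mul_of_nonneg_left hle (by positivity)
      _ = y ^ (a - s - 1) * (1 - y) ^ (s - 1) := by
          rw [mul_assoc, ← Real.rpow_add h1y]
          congr 2
          ring
  · -- integrable bound
    have h1 : (0:ℝ) < a - s := by linarith
    have := integrableOn_beta h1 hs
    apply MeasureTheory.IntegrableOn.congr_fun this ?_ measurableSet_Ioo
    intro y _
    norm_num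
  · -- pointwise convergence
    rw [MeasureTheory.ae_restrict_iff' measurableSet_Ioo]
    apply Eventually.of_forall
    intro y hy
    have h1y : (0:ℝ) < 1 - y := by linarith [hy.2]
    apply Tendsto.const_mul
    have hc : Tendsto (fun t : ℝ => (1 - t * y) ^ (s - b)) (nhds 1) (nhds ((1 - y) ^ (s - b))) := by
      have h1 : Tendsto (fun t : ℝ => 1 - t * y) (nhds 1) (nhds (1 - y)) := by
        have : Continuous (fun t : ℝ => 1 - t * y) := by fun_prop
        have := this.tendsto 1
        simpa using this
      have h2 : ContinuousAt (fun u : ℝ => u ^ (s - b)) (1 - y) :=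
        Real.continuousAt_rpow_const _ _ (Or.inl (ne_of_gt h1y))
      exact h2.tendsto.comp h1
    exact hc.mono_left nhdsWithin_le_nhds

end Limit

theorem hypergeometric_boundary_limit
    (a b s : ℝ) (ha : 0 < a) (hb : 0 < b) (hs : 0 < s) (has : s < a) (hbs : s < b) :
    Filter.Tendsto (fun t : ℝ => (1 - t) ^ s * hypF a b (a + b - s) t)
      (nhdsWithin 1 (Set.Iio 1))
      (nhds (Real.Gamma (a + b - s) * Real.Gamma s / (Real.Gamma a * Real.Gamma b))) := by
  have has' : (0:ℝ) < a - s := by linarith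
  have hB : 0 < rbeta b (a - s) := rbeta_pos hb has'
  have hBne : rbeta b (a - s) ≠ 0 := ne_of_gt hB
  have hconst : Real.Gamma (a + b - s) * Real.Gamma s / (Real.Gamma a * Real.Gamma b)
      = rbeta (a - s) s / rbeta b (a - s) := by
    rw [rbeta_eq has' hs, rbeta_eq hb has',
      show a - s + s = a by ring, show b + (a - s) = a + b - s by ring]
    have g1 := Real.Gamma_pos_of_pos ha
    have g2 := Real.Gamma_pos_of_pos hb
    have g3 := Real.Gamma_pos_of_pos hs
    have g4 := Real.Gamma_pos_of_pos has'
    have g5 := Real.Gamma_pos_of_pos (show (0:ℝ) < a + b - s by linarith)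
    field_simp
  rw [hconst]
  have hmain := (tendsto_integral_limit ha hb hs has hbs).div_const (rbeta b (a - s))
  apply hmain.congr'
  have h01 : Set.Ioo (0:ℝ) 1 ∈ nhdsWithin 1 (Set.Iio 1) := by
    apply mem_nhdsWithin.mpr
    exact ⟨Set.Ioi 0, isOpen_Ioi, Set.mem_Ioi.mpr one_pos, fun x hx => ⟨hx.1, hx.2⟩⟩
  filter_upwards [h01] with t ht
  have ht0 : 0 < t := ht.1
  have ht1 : t < 1 := ht.2
  have h1t : (0:ℝ) < 1 - t := by linarith
  have he := euler_rep (α := a) (β := b) (γ := a + b - s) ha hb (by linarith) ht0 ht1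
  rw [show a + b - s - b - 1 = a - s - 1 by ring, show a + b - s - b = a - s by ring] at he
  have hm := moebius_sub ha hb hs has ht0 ht1
  set I₂ := ∫ y in Set.Ioo (0:ℝ) 1,
      y ^ (a - s - 1) * (1 - y) ^ (b - 1) * (1 - t * y) ^ (s - b) with hI₂
  have hBh : rbeta b (a - s) * hypF a b (a + b - s) t = (1 - t) ^ (-s) * I₂ := by
    rw [← he]
    exact hm
  have hpow : (1 - t) ^ s * (1 - t) ^ (-s) = 1 := by
    rw [← Real.rpow_add h1t]
    simp
  have : (1 - t) ^ s * hypF a b (a + b - s) t = I₂ / rbeta b (a - s) := by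
    rw [eq_div_iff hBne]
    calc (1 - t) ^ s * hypF a b (a + b - s) t * rbeta b (a - s)
        = (1 - t) ^ s * (rbeta b (a - s) * hypF a b (a + b - s) t) := by ring
      _ = (1 - t) ^ s * ((1 - t) ^ (-s) * I₂) := by rw [hBh]
      _ = ((1 - t) ^ s * (1 - t) ^ (-s)) * I₂ := by ring
      _ = I₂ := by rw [hpow]; ring
  exact this.symm
end

section
/- For real a, b > 0, one has lim_{t→1⁻} F(a, b, a+b; t) / log(1/(1−t)) = Γ(a+b) / (Γ(a) Γ(b)). -/
open Filter Finset

/-- The coefficients of the hypergeometric series `F(a, b, a+b; ·)`. -/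
noncomputable def hypCoef (a b : ℝ) (n : ℕ) : ℝ :=
  (ascPochhammer ℝ n).eval a * (ascPochhammer ℝ n).eval b
    / ((ascPochhammer ℝ n).eval (a + b) * (n.factorial : ℝ))

lemma pochEval (s : ℝ) (n : ℕ) :
    (ascPochhammer ℝ n).eval s = ∏ j ∈ Finset.range n, (s + j) := by
  induction n with
  | zero => simp
  | succ n ih => rw [ascPochhammer_succ_eval, ih, Finset.prod_range_succ]

lemma hypCoef_pos (a b : ℝ) (ha : 0 < a) (hb : 0 < b) (n : ℕ) : 0 < hypCoef a b n := by
  have h1 := ascPochhammer_pos n a ha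
  have h2 := ascPochhammer_pos n b hb
  have h3 := ascPochhammer_pos n (a + b) (by linarith)
  have h4 : (0:ℝ) < n.factorial := by positivity
  unfold hypCoef; positivity

lemma key_eq (a b : ℝ) (ha : 0 < a) (hb : 0 < b) (n : ℕ) (hn : 1 ≤ n) :
    (n : ℝ) * hypCoef a b n =
    (Real.GammaSeq (a + b) n / (Real.GammaSeq a n * Real.GammaSeq b n)) *
      (((n : ℝ) * ((a + b) + n)) / ((a + n) * (b + n))) := by
  have hnp : (0 : ℝ) < n := by exact_mod_cast hn
  have hPa := ascPochhammer_pos n a ha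
  have hPb := ascPochhammer_pos n b hb
  have hPab := ascPochhammer_pos n (a + b) (by linarith)
  have hfac : (0 : ℝ) < n.factorial := by positivity
  have hra : (0:ℝ) < (n:ℝ) ^ a := Real.rpow_pos_of_pos hnp a
  have hrb : (0:ℝ) < (n:ℝ) ^ b := Real.rpow_pos_of_pos hnp b
  have hpow : (n:ℝ) ^ (a + b) = (n:ℝ) ^ a * (n:ℝ) ^ b := Real.rpow_add hnp a b
  unfold hypCoef
  simp only [Real.GammaSeq, ← pochEval, ascPochhammer_succ_eval]
  rw [hpow]
  field_simp

lemma factor_tendsto (a b : ℝ) (ha : 0 < a) (hb : 0 < b) :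
    Tendsto (fun n : ℕ => ((n : ℝ) * ((a + b) + n)) / ((a + n) * (b + n))) atTop (nhds 1) := by
  have h0 : Tendsto (fun n : ℕ => (1 + (a+b)/n) / ((1 + a/n) * (1 + b/n))) atTop (nhds 1) := by
    have hab := tendsto_const_div_atTop_nhds_zero_nat (a + b)
    have hA := tendsto_const_div_atTop_nhds_zero_nat a
    have hB := tendsto_const_div_atTop_nhds_zero_nat b
    have h : Tendsto (fun n : ℕ => (1 + (a+b)/n) / ((1 + a/n) * (1 + b/n))) atTop
        (nhds ((1 + 0) / ((1 + 0) * (1 + 0)))) :=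
      ((tendsto_const_nhds.add hab)).div
        ((tendsto_const_nhds.add hA).mul (tendsto_const_nhds.add hB)) (by norm_num)
    simpa using h
  refine h0.congr' ?_
  filter_upwards [eventually_ge_atTop 1] with n hn
  have hnp : (0 : ℝ) < n := by exact_mod_cast hn
  have h1 : (0:ℝ) < a + n := by linarith
  have h2 : (0:ℝ) < b + n := by linarith
  field_simp
  ring

lemma nc_tendsto (a b : ℝ) (ha : 0 < a) (hb : 0 < b) :
    Tendsto (fun n : ℕ => (n : ℝ) * hypCoef a b n) atTop
      (nhds (Real.Gamma (a + b) / (Real.Gamma a * Real.Gamma b))) := by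
  have hGa : Real.Gamma a ≠ 0 := (Real.Gamma_pos_of_pos ha).ne'
  have hGb : Real.Gamma b ≠ 0 := (Real.Gamma_pos_of_pos hb).ne'
  have h1 := (((Real.GammaSeq_tendsto_Gamma (a + b)).div
      ((Real.GammaSeq_tendsto_Gamma a).mul (Real.GammaSeq_tendsto_Gamma b))
      (by simp [hGa, hGb])).mul (factor_tendsto a b ha hb))
  rw [mul_one] at h1
  refine h1.congr' ?_
  filter_upwards [eventually_ge_atTop 1] with n hn
  exact (key_eq a b ha hb n hn).symm

lemma coef_bdd (a b : ℝ) (ha : 0 < a) (hb : 0 < b) :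
    ∃ M : ℝ, ∀ n, hypCoef a b n ≤ M := by
  have h0 : Tendsto (fun n : ℕ => hypCoef a b n) atTop (nhds 0) := by
    have h1 := (nc_tendsto a b ha hb).mul (tendsto_const_div_atTop_nhds_zero_nat 1)
    rw [mul_zero] at h1
    refine h1.congr' ?_
    filter_upwards [eventually_ge_atTop 1] with n hn
    have hnp : (0:ℝ) < (n:ℝ) := by exact_mod_cast hn
    field_simp
  obtain ⟨M, hM⟩ := h0.bddAbove_range
  exact ⟨M, fun n => hM ⟨n, rfl⟩⟩

lemma log_hasSum {t : ℝ} (ht : |t| < 1) :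
    HasSum (fun n : ℕ => t ^ n / n) (Real.log (1 / (1 - t))) := by
  have h := Real.hasSum_pow_div_log_of_abs_lt_one ht
  rw [← hasSum_nat_add_iff' (f := fun n : ℕ => t ^ n / n) 1]
  simp only [range_one, sum_singleton, Nat.cast_zero, div_zero, sub_zero, pow_zero]
  rw [one_div, Real.log_inv]
  convert h using 2 with n
  · rfl
  · push_cast; ring_nf

lemma d_le (t : ℝ) (ht0 : 0 ≤ t) (ht1 : t < 1) (n : ℕ) : t ^ n / n ≤ 1 / n := by
  rcases Nat.eq_zero_or_pos n with h | h
  · simp [h]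
  · have h' : (0:ℝ) < n := by exact_mod_cast h
    exact div_le_div_of_nonneg_right (pow_le_one₀ ht0 ht1.le) h'.le

lemma estimate (a b : ℝ) (ha : 0 < a) (hb : 0 < b) {η : ℝ} (hη : 0 < η) {N : ℕ} (hN1 : 1 ≤ N)
    (hN : ∀ n, N ≤ n → |(n : ℝ) * hypCoef a b n
      - Real.Gamma (a + b) / (Real.Gamma a * Real.Gamma b)| ≤ η)
    {t : ℝ} (ht0 : 0 ≤ t) (ht1 : t < 1) :
    |(∑' n : ℕ, hypCoef a b n * t ^ n)
        - Real.Gamma (a + b) / (Real.Gamma a * Real.Gamma b) * Real.log (1 / (1 - t))|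
      ≤ (∑ n ∈ range N, (hypCoef a b n
            + Real.Gamma (a + b) / (Real.Gamma a * Real.Gamma b) * (1 / n)))
        + η * Real.log (1 / (1 - t)) := by
  have hGa := Real.Gamma_pos_of_pos ha
  have hGb := Real.Gamma_pos_of_pos hb
  have hGab := Real.Gamma_pos_of_pos (show (0:ℝ) < a + b by linarith)
  set K : ℝ := Real.Gamma (a + b) / (Real.Gamma a * Real.Gamma b) with hKdef
  have hK : 0 ≤ K := by positivity
  have habs : |t| < 1 := abs_lt.mpr ⟨by linarith, ht1⟩
  have hd := log_hasSum habs
  set L : ℝ := Real.log (1 / (1 - t)) with hLdef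
  set c : ℕ → ℝ := hypCoef a b with hcdef
  have hd_sum : Summable (fun n : ℕ => t ^ n / n) := hd.summable
  have hd_nonneg : ∀ n : ℕ, (0:ℝ) ≤ t ^ n / n := fun n => by positivity
  have hpow_le : ∀ n : ℕ, t ^ n ≤ 1 := fun n => pow_le_one₀ ht0 ht1.le
  have hc_nonneg : ∀ n, 0 ≤ c n := fun n => (hypCoef_pos a b ha hb n).le
  obtain ⟨M, hM⟩ := coef_bdd a b ha hb
  have hc_sum : Summable (fun n => c n * t ^ n) := by
    refine Summable.of_nonneg_of_le
      (fun n => mul_nonneg (hc_nonneg n) (pow_nonneg ht0 n))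
      (fun n => mul_le_mul_of_nonneg_right (hM n) (pow_nonneg ht0 n)) ?_
    exact (summable_geometric_of_lt_one ht0 ht1).mul_left M
  set f : ℕ → ℝ := fun n => c n * t ^ n - K * (t ^ n / n) with hfdef
  have hf_sum : Summable f := hc_sum.sub (hd_sum.mul_left K)
  have hfa : Summable (fun n => |f n|) := summable_abs_iff.mpr hf_sum
  have h1 : (∑' n : ℕ, c n * t ^ n) - K * L = ∑' n, f n := by
    rw [hc_sum.tsum_sub (hd_sum.mul_left K), tsum_mul_left, hd.tsum_eq]
  have h2 : |∑' n, f n| ≤ ∑' n, |f n| := by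
    simpa using norm_tsum_le_tsum_norm (f := f) (by simpa using hfa)
  have h3 : ∑' n, |f n| = (∑ n ∈ range N, |f n|) + ∑' n, |f (n + N)| :=
    (hfa.sum_add_tsum_nat_add N).symm
  have h4 : ∑ n ∈ range N, |f n| ≤ ∑ n ∈ range N, (c n + K * (1 / n)) := by
    refine Finset.sum_le_sum fun n _ => ?_
    have h41 : |f n| ≤ c n * t ^ n + K * (t ^ n / n) := by
      refine (abs_sub _ _).trans ?_
      rw [abs_of_nonneg (mul_nonneg (hc_nonneg n) (pow_nonneg ht0 n)),
        abs_of_nonneg (mul_nonneg hK (hd_nonneg n))]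
    refine h41.trans (add_le_add ?_ ?_)
    · calc c n * t ^ n ≤ c n * 1 := mul_le_mul_of_nonneg_left (hpow_le n) (hc_nonneg n)
        _ = c n := mul_one _
    · exact mul_le_mul_of_nonneg_left (d_le t ht0 ht1 n) hK
  have h5 : ∑' n, |f (n + N)| ≤ η * L := by
    have htail_sum : Summable (fun n => |f (n + N)|) :=
      (summable_nat_add_iff (f := fun n => |f n|) N).mpr hfa
    have hdtail_sum : Summable (fun n : ℕ => t ^ (n + N) / (n + N : ℕ)) :=
      (summable_nat_add_iff (f := fun n : ℕ => t ^ n / n) N).mpr hd_sum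
    have hterm : ∀ n : ℕ, |f (n + N)| ≤ η * (t ^ (n + N) / (n + N : ℕ)) := by
      intro n
      have hm1 : 1 ≤ n + N := le_trans hN1 (Nat.le_add_left N n)
      have hmp : (0:ℝ) < ((n + N : ℕ) : ℝ) := by exact_mod_cast hm1
      have hmne : ((n + N : ℕ) : ℝ) ≠ 0 := hmp.ne'
      have hrw : f (n + N) = (t ^ (n + N) / ((n + N : ℕ) : ℝ)) *
          (((n + N : ℕ) : ℝ) * c (n + N) - K) := by
        show c (n + N) * t ^ (n + N) - K * (t ^ (n + N) / ((n + N : ℕ) : ℝ)) = _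
        field_simp
      rw [hrw, abs_mul, abs_of_nonneg (hd_nonneg (n + N))]
      calc t ^ (n + N) / ((n + N : ℕ) : ℝ) * |((n + N : ℕ) : ℝ) * c (n + N) - K|
            ≤ t ^ (n + N) / ((n + N : ℕ) : ℝ) * η :=
            mul_le_mul_of_nonneg_left (hN (n + N) (Nat.le_add_left N n)) (hd_nonneg (n + N))
        _ = η * (t ^ (n + N) / ((n + N : ℕ) : ℝ)) := mul_comm _ _
    calc ∑' n, |f (n + N)| ≤ ∑' n : ℕ, η * (t ^ (n + N) / (n + N : ℕ)) :=
          htail_sum.tsum_le_tsum hterm (hdtail_sum.mul_left η)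
      _ = η * ∑' n : ℕ, t ^ (n + N) / (n + N : ℕ) := tsum_mul_left
      _ ≤ η * L := by
          refine mul_le_mul_of_nonneg_left ?_ hη.le
          have hsplit := hd_sum.sum_add_tsum_nat_add N
          rw [hd.tsum_eq] at hsplit
          have hfin : 0 ≤ ∑ n ∈ range N, t ^ n / (n:ℝ) :=
            Finset.sum_nonneg fun n _ => hd_nonneg n
          push_cast
          push_cast at hsplit
          linarith
  calc |(∑' n : ℕ, c n * t ^ n) - K * L| = |∑' n, f n| := by rw [h1]
    _ ≤ ∑' n, |f n| := h2
    _ = (∑ n ∈ range N, |f n|) + ∑' n, |f (n + N)| := h3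
    _ ≤ (∑ n ∈ range N, (c n + K * (1 / n))) + η * L := add_le_add h4 h5

lemma log_tendsto_atTop :
    Tendsto (fun t : ℝ => Real.log (1 / (1 - t))) (nhdsWithin 1 (Set.Iio 1)) atTop := by
  have h1 : Tendsto (fun t : ℝ => 1 - t) (nhdsWithin 1 (Set.Iio 1)) (nhdsWithin 0 (Set.Ioi 0)) := by
    refine tendsto_nhdsWithin_of_tendsto_nhds_of_eventually_within _ ?_ ?_
    · have : Tendsto (fun t : ℝ => 1 - t) (nhds 1) (nhds (1 - 1)) :=
        (tendsto_const_nhds.sub tendsto_id)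
      simpa using this.mono_left nhdsWithin_le_nhds
    · filter_upwards [self_mem_nhdsWithin] with t ht
      exact sub_pos.mpr (Set.mem_Iio.mp ht)
  have h2 : Tendsto (fun t : ℝ => 1 / (1 - t)) (nhdsWithin 1 (Set.Iio 1)) atTop := by
    simpa [one_div, Function.comp_def] using tendsto_inv_nhdsGT_zero.comp h1
  exact Real.tendsto_log_atTop.comp h2

theorem hypergeometric_log_limit (a b : ℝ) (ha : 0 < a) (hb : 0 < b) :
    Filter.Tendsto (fun t : ℝ => hypF a b (a + b) t / Real.log (1 / (1 - t)))
      (nhdsWithin 1 (Set.Iio 1))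
      (nhds (Real.Gamma (a + b) / (Real.Gamma a * Real.Gamma b))) := by
  have hGa := Real.Gamma_pos_of_pos ha
  have hGb := Real.Gamma_pos_of_pos hb
  have hGab := Real.Gamma_pos_of_pos (show (0:ℝ) < a + b by linarith)
  set K : ℝ := Real.Gamma (a + b) / (Real.Gamma a * Real.Gamma b) with hKdef
  have hK : 0 ≤ K := by positivity
  rw [Metric.tendsto_nhds]
  intro ε hε
  -- get N from the coefficient asymptotics
  obtain ⟨N0, hN0⟩ := Metric.tendsto_atTop.mp (nc_tendsto a b ha hb) (ε / 2) (by positivity)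
  set N := max N0 1 with hNdef
  have hN1 : 1 ≤ N := le_max_right _ _
  have hN : ∀ n, N ≤ n → |(n : ℝ) * hypCoef a b n - K| ≤ ε / 2 := by
    intro n hn
    have := hN0 n (le_trans (le_max_left _ _) hn)
    rw [Real.dist_eq] at this
    exact this.le
  set C : ℝ := ∑ n ∈ range N, (hypCoef a b n + K * (1 / n)) with hCdef
  have hC : 0 ≤ C := by
    refine Finset.sum_nonneg fun n _ => ?_
    have h1 := (hypCoef_pos a b ha hb n).le
    have h2 : (0:ℝ) ≤ K * (1 / n) := by positivity
    linarith
  -- eventually near 1 from the left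
  have hev1 : ∀ᶠ t : ℝ in nhdsWithin 1 (Set.Iio 1), 0 < t :=
    eventually_nhdsWithin_of_eventually_nhds (eventually_gt_nhds (by norm_num))
  have hev2 : ∀ᶠ t : ℝ in nhdsWithin 1 (Set.Iio 1), t < 1 := by
    filter_upwards [self_mem_nhdsWithin] with t ht using ht
  have hev3 : ∀ᶠ t : ℝ in nhdsWithin 1 (Set.Iio 1),
      2 * C / ε + 1 < Real.log (1 / (1 - t)) :=
    log_tendsto_atTop.eventually_gt_atTop _
  filter_upwards [hev1, hev2, hev3] with t ht0 ht1 htL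
  set L : ℝ := Real.log (1 / (1 - t)) with hLdef
  have hL0 : 0 < L := by
    have : (0:ℝ) ≤ 2 * C / ε := by positivity
    linarith
  have hest := estimate a b ha hb (by positivity : (0:ℝ) < ε / 2) hN1 hN ht0.le ht1
  have hFval : hypF a b (a + b) t = ∑' n : ℕ, hypCoef a b n * t ^ n := rfl
  rw [Real.dist_eq]
  have hquot : hypF a b (a + b) t / L - K = ((∑' n : ℕ, hypCoef a b n * t ^ n) - K * L) / L := by
    rw [hFval]
    field_simp
  rw [hquot, abs_div, abs_of_pos hL0]
  rw [div_lt_iff₀ hL0]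
  calc |(∑' n : ℕ, hypCoef a b n * t ^ n) - K * L| ≤ C + ε / 2 * L := hest
    _ < ε * L := by
        have h6 : ε / 2 * (2 * C / ε + 1) > C := by
          rw [mul_add, mul_one]
          have : ε / 2 * (2 * C / ε) = C := by
            field_simp
          linarith
        nlinarith
end
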